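/- arXiv:1811.07000 — 2 statements merged into one kernel-verified Lean document; each statement's English description precedes it below -/
import Mathlib

section
/- Let B ∈ SL(2,ℂ) with Tr(B) ≠ 2 and Tr(B) ≠ -2, and let A be a 2×2 complex matrix with Tr(A) = 0 and Tr(A·B) = 0. Then there exists a 2×2 complex matrix C with Tr(C) = 0 such that A = C - B·C·B⁻¹. -/
open Matrix

theorem stmt_0 (B : Matrix.SpecialLinearGroup (Fin 2) ℂ)
    (hB2 : Matrix.trace (B : Matrix (Fin 2) (Fin 2) ℂ) ≠ 2)
    (hBm2 : Matrix.trace (B : Matrix (Fin 2) (Fin 2) ℂ) ≠ -2)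
    (A : Matrix (Fin 2) (Fin 2) ℂ)
    (hA : Matrix.trace A = 0)
    (hAB : Matrix.trace (A * (B : Matrix (Fin 2) (Fin 2) ℂ)) = 0) :
    ∃ C : Matrix (Fin 2) (Fin 2) ℂ, Matrix.trace C = 0 ∧
      A = C - (B : Matrix (Fin 2) (Fin 2) ℂ) * C * (B : Matrix (Fin 2) (Fin 2) ℂ)⁻¹ := by
  set b : Matrix (Fin 2) (Fin 2) ℂ := (B : Matrix (Fin 2) (Fin 2) ℂ) with hb
  set t : ℂ := Matrix.trace b with ht
  have hdet : b.det = 1 := B.2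
  have hdet' : b 0 0 * b 1 1 - b 0 1 * b 1 0 = 1 := by
    rw [Matrix.det_fin_two] at hdet; linear_combination hdet
  have hA' : A 0 0 + A 1 1 = 0 := by rw [Matrix.trace_fin_two] at hA; exact hA
  have hAB' : A 0 0 * b 0 0 + A 0 1 * b 1 0 + (A 1 0 * b 0 1 + A 1 1 * b 1 1) = 0 := by
    simpa [Matrix.trace_fin_two, Matrix.mul_apply, Fin.sum_univ_two] using hAB
  have ht' : t = b 0 0 + b 1 1 := by rw [ht, Matrix.trace_fin_two]
  -- Cayley-Hamilton for b
  have hbb : b * b = t • b - 1 := by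
    ext i j
    fin_cases i <;> fin_cases j <;>
      simp [Matrix.mul_apply, Fin.sum_univ_two, Matrix.one_apply, ht']
    all_goals first | linear_combination -hdet' | ring
  -- polarized identity using trace A = 0 and trace (A*b) = 0
  have hba : b * A = t • A - A * b := by
    ext i j
    fin_cases i <;> fin_cases j <;>
      simp [Matrix.mul_apply, Fin.sum_univ_two, ht']
    · linear_combination hAB' - b 1 1 * hA'
    · linear_combination b 0 1 * hA'
    · linear_combination b 1 0 * hA'
    · linear_combination hAB' - b 0 0 * hA'
  have haba : b * A * b = A := by
    rw [hba, sub_mul, smul_mul_assoc, mul_assoc, hbb, mul_sub, mul_one, Matrix.mul_smul]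
    abel
  set C0 : Matrix (Fin 2) (Fin 2) ℂ := A * b * b - b * A * b with hC0
  have key : C0 * b - b * C0 = (t ^ 2 - 4) • (A * b) := by
    have e1 : A * b * b = t • (A * b) - A := by
      rw [mul_assoc, hbb, mul_sub, mul_one, Matrix.mul_smul]
    have e2 : b * (A * b * b) = A * b := by
      rw [show b * (A * b * b) = (b * A * b) * b by noncomm_ring, haba]
    have e3 : b * (b * A * b) = t • A - A * b := by
      rw [show b * (b * A * b) = (b * b) * A * b by noncomm_ring, hbb, sub_mul, sub_mul,
        smul_mul_assoc, smul_mul_assoc, one_mul, haba]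
    have e4 : A * b * b * b = t • (t • (A * b) - A) - A * b := by
      rw [show A * b * b * b = (A * b * b) * b by rfl, e1, sub_mul, smul_mul_assoc, e1]
    have e5 : b * A * b * b = A * b := by rw [haba]
    calc C0 * b - b * C0
        = (A * b * b * b - b * A * b * b) - (b * (A * b * b) - b * (b * A * b)) := by
          rw [hC0]; noncomm_ring
      _ = (t • (t • (A * b) - A) - A * b - A * b) - (A * b - (t • A - A * b)) := by
          rw [e2, e3, e4, e5]
      _ = (t ^ 2 - 4) • (A * b) := by
          rw [smul_sub, smul_smul, sub_smul]
          module
  have hd : (t ^ 2 - 4) ≠ 0 := by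
    intro h
    rcases mul_eq_zero.mp (by linear_combination h : (t - 2) * (t + 2) = 0) with h' | h'
    · exact hB2 (by linear_combination h')
    · exact hBm2 (by linear_combination h')
  refine ⟨(t ^ 2 - 4)⁻¹ • C0, ?_, ?_⟩
  · have h := Matrix.trace_mul_comm b (A * b)
    rw [← mul_assoc] at h
    rw [Matrix.trace_smul, hC0, Matrix.trace_sub, h, sub_self, smul_zero]
  · have hi : b * b⁻¹ = 1 := Matrix.mul_nonsing_inv b (by rw [hdet]; exact isUnit_one)
    have hcb : ((t ^ 2 - 4)⁻¹ • C0) * b - b * ((t ^ 2 - 4)⁻¹ • C0) = A * b := by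
      rw [smul_mul_assoc, Matrix.mul_smul, ← smul_sub, key, smul_smul,
        inv_mul_cancel₀ hd, one_smul]
    calc A = (A * b) * b⁻¹ := by rw [mul_assoc, hi, mul_one]
      _ = (((t ^ 2 - 4)⁻¹ • C0) * b - b * ((t ^ 2 - 4)⁻¹ • C0)) * b⁻¹ := by rw [hcb]
      _ = (t ^ 2 - 4)⁻¹ • C0 - b * ((t ^ 2 - 4)⁻¹ • C0) * b⁻¹ := by
          rw [sub_mul, mul_assoc ((t ^ 2 - 4)⁻¹ • C0), hi, mul_one, mul_assoc]
end

section
/- Let B ∈ SL(2,ℂ) with Tr(B) ≠ ±2. Then the ℂ-linear subspace { C - B·C·B⁻¹ : C ∈ sl(2,ℂ) } of sl(2,ℂ) equals the subspace { A ∈ sl(2,ℂ) : Tr(A·B) = 0 }, and both subspaces have complex dimension 2. -/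
open Matrix

theorem stmt_2 (B : Matrix.SpecialLinearGroup (Fin 2) ℂ)
    (hB2 : Matrix.trace (B : Matrix (Fin 2) (Fin 2) ℂ) ≠ 2)
    (hBm2 : Matrix.trace (B : Matrix (Fin 2) (Fin 2) ℂ) ≠ -2) :
    (∀ A : Matrix (Fin 2) (Fin 2) ℂ,
      (∃ C : Matrix (Fin 2) (Fin 2) ℂ, Matrix.trace C = 0 ∧
        A = C - (B : Matrix (Fin 2) (Fin 2) ℂ) * C * (B : Matrix (Fin 2) (Fin 2) ℂ)⁻¹)
      ↔ (Matrix.trace A = 0 ∧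
          Matrix.trace (A * (B : Matrix (Fin 2) (Fin 2) ℂ)) = 0)) ∧
    (∀ S : Submodule ℂ (Matrix (Fin 2) (Fin 2) ℂ),
      (S : Set (Matrix (Fin 2) (Fin 2) ℂ)) =
        {A | Matrix.trace A = 0 ∧ Matrix.trace (A * (B : Matrix (Fin 2) (Fin 2) ℂ)) = 0} →
      Module.finrank ℂ S = 2) := by
  set Bm : Matrix (Fin 2) (Fin 2) ℂ := (B : Matrix (Fin 2) (Fin 2) ℂ) with hBm
  have hdet : Bm.det = 1 := B.property
  have hdet' : Bm 0 0 * Bm 1 1 - Bm 0 1 * Bm 1 0 = 1 := by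
    rw [Matrix.det_fin_two] at hdet; exact hdet
  have hBinv : Bm⁻¹ = !![Bm 1 1, -(Bm 0 1); -(Bm 1 0), Bm 0 0] := by
    rw [Matrix.inv_def, hdet, Matrix.adjugate_fin_two]
    simp
  have hBBinv : Bm⁻¹ * Bm = 1 := Matrix.nonsing_inv_mul Bm (by rw [hdet]; exact isUnit_one)
  set t : ℂ := Matrix.trace Bm with ht
  have ht' : t = Bm 0 0 + Bm 1 1 := by rw [ht, Matrix.trace_fin_two]
  have h4 : t ^ 2 - 4 ≠ 0 := by
    have he : t ^ 2 - 4 = (t - 2) * (t + 2) := by ring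
    rw [he]
    exact mul_ne_zero (sub_ne_zero.mpr hB2) (fun h => hBm2 (by linear_combination h))
  constructor
  · intro A
    constructor
    · rintro ⟨C, hC, rfl⟩
      constructor
      · rw [Matrix.trace_sub, hC, Matrix.trace_mul_comm (Bm * C) Bm⁻¹, ← Matrix.mul_assoc,
          hBBinv, Matrix.one_mul, hC, sub_self]
      · rw [Matrix.sub_mul, Matrix.trace_sub, Matrix.mul_assoc (Bm * C) Bm⁻¹ Bm, hBBinv,
          Matrix.mul_one, Matrix.trace_mul_comm, sub_self]
    · rintro ⟨htrA, htrAB⟩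
      have htrA' : A 0 0 + A 1 1 = 0 := by rw [Matrix.trace_fin_two] at htrA; exact htrA
      have htrAB' : A 0 0 * Bm 0 0 + A 0 1 * Bm 1 0 + A 1 0 * Bm 0 1 + A 1 1 * Bm 1 1 = 0 := by
        rw [Matrix.trace_fin_two] at htrAB
        simp only [Matrix.mul_apply, Fin.sum_univ_two] at htrAB
        linear_combination htrAB
      set D : Matrix (Fin 2) (Fin 2) ℂ := t • (A * Bm) - (2 : ℂ) • A with hD
      have key : (t ^ 2 - 4) • A = D - Bm * D * Bm⁻¹ := by
        ext i j
        fin_cases i <;> fin_cases j <;>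
          simp only [Fin.mk_zero, Fin.mk_one, Matrix.of_apply, Matrix.cons_val_zero, Matrix.cons_val_one, Matrix.head_cons, hD, hBinv, ht', Matrix.smul_apply, Matrix.sub_apply, Matrix.mul_apply,
            Fin.sum_univ_two, Matrix.cons_val', Matrix.cons_val_zero, Matrix.cons_val_one,
            Matrix.head_cons, Matrix.head_fin_const, Matrix.empty_val',
            Matrix.cons_val_fin_one, smul_eq_mul]
        · linear_combination (-1 + Bm 1 1 ^ 2 + Bm 0 1 * Bm 1 0 - Bm 0 0 * Bm 1 1
              - Bm 0 0 * Bm 0 1 * Bm 1 0 * Bm 1 1 - Bm 0 0 ^ 2 + Bm 0 0 ^ 2 * Bm 1 1 ^ 2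
              - Bm 0 0 ^ 2 * Bm 0 1 * Bm 1 0 + Bm 0 0 ^ 3 * Bm 1 1) * htrA'
            + (-(A 1 1) + A 0 0 + Bm 0 1 * Bm 1 1 * A 1 0 - Bm 0 0 * Bm 1 1 * A 1 1
              + Bm 0 0 * Bm 0 1 * A 1 0 - Bm 0 0 ^ 2 * A 1 1) * hdet'
            + (-(Bm 1 1) + Bm 0 0) * htrAB'
        · linear_combination (-(Bm 0 1) * Bm 1 1 - Bm 0 0 * Bm 0 1) * htrA'
            + (2 * A 0 1 + Bm 0 1 * Bm 1 1 * A 1 1 + Bm 0 0 * Bm 1 1 * A 0 1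
              + Bm 0 0 * Bm 0 1 * A 1 1 + Bm 0 0 ^ 2 * A 0 1) * hdet'
            + (2 * Bm 0 1) * htrAB'
        · linear_combination (-2 * Bm 1 0 * Bm 1 1 - Bm 0 1 * Bm 1 0 ^ 2 * Bm 1 1
              - 2 * Bm 0 0 * Bm 1 0 + Bm 0 0 * Bm 1 0 * Bm 1 1 ^ 2
              - Bm 0 0 * Bm 0 1 * Bm 1 0 ^ 2 + Bm 0 0 ^ 2 * Bm 1 0 * Bm 1 1) * htrA'
            + (2 * A 1 0 + Bm 1 1 ^ 2 * A 1 0 - Bm 1 0 * Bm 1 1 * A 1 1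
              + Bm 0 0 * Bm 1 1 * A 1 0 - Bm 0 0 * Bm 1 0 * A 1 1) * hdet'
            + (2 * Bm 1 0) * htrAB'
        · linear_combination (-1 + Bm 0 1 * Bm 1 0 + Bm 0 0 ^ 2) * htrA'
            + (A 1 1 - A 0 0 + Bm 1 1 ^ 2 * A 1 1 + Bm 1 0 * Bm 1 1 * A 0 1
              + Bm 0 0 * Bm 1 1 * A 1 1 + Bm 0 0 * Bm 1 0 * A 0 1) * hdet'
            + (Bm 1 1 - Bm 0 0) * htrAB'
      refine ⟨(t ^ 2 - 4)⁻¹ • D, ?_, ?_⟩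
      · rw [hD, Matrix.trace_smul, Matrix.trace_sub, Matrix.trace_smul, Matrix.trace_smul,
          htrA, htrAB]
        simp
      · have : (t ^ 2 - 4)⁻¹ • ((t ^ 2 - 4) • A) = (t ^ 2 - 4)⁻¹ • (D - Bm * D * Bm⁻¹) := by
          rw [key]
        rw [smul_smul, inv_mul_cancel₀ h4, one_smul] at this
        rw [this, smul_sub, Matrix.mul_smul, Matrix.smul_mul]
  · intro S hS
    set L : Matrix (Fin 2) (Fin 2) ℂ →ₗ[ℂ] ℂ × ℂ :=
      { toFun := fun A => (Matrix.trace A, Matrix.trace (A * Bm)),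
        map_add' := by intro x y; simp [Matrix.add_mul],
        map_smul' := by intro c x; simp [Matrix.smul_mul] } with hL
    have hSker : S = LinearMap.ker L := by
      ext A
      have hA := Set.ext_iff.mp hS A
      simp only [SetLike.mem_coe, Set.mem_setOf_eq] at hA
      rw [hA]
      simp [hL, LinearMap.mem_ker, Prod.ext_iff]
    have htrB2 : Matrix.trace (Bm * Bm) = t ^ 2 - 2 := by
      rw [Matrix.trace_fin_two, ht']
      simp only [Matrix.mul_apply, Fin.sum_univ_two]
      linear_combination (-2 : ℂ) * hdet'
    have hrange : LinearMap.range L = ⊤ := by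
      rw [LinearMap.range_eq_top]
      rintro ⟨x, y⟩
      refine ⟨(((t ^ 2 - 2) * x - t * y) / (t ^ 2 - 4)) • (1 : Matrix (Fin 2) (Fin 2) ℂ)
        + ((2 * y - t * x) / (t ^ 2 - 4)) • Bm, ?_⟩
      have htr1 : Matrix.trace (1 : Matrix (Fin 2) (Fin 2) ℂ) = 2 := by
        simp [Matrix.trace_one]
      simp only [hL, LinearMap.coe_mk, AddHom.coe_mk, Matrix.trace_add, Matrix.trace_smul,
        Matrix.add_mul, Matrix.smul_mul, Matrix.one_mul, htr1, ← ht, htrB2, smul_eq_mul]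
      rw [Prod.mk.injEq]
      constructor <;> (field_simp; ring)
    have hrank : Module.finrank ℂ (LinearMap.range L) + Module.finrank ℂ (LinearMap.ker L)
        = Module.finrank ℂ (Matrix (Fin 2) (Fin 2) ℂ) := L.finrank_range_add_finrank_ker
    rw [hrange, finrank_top] at hrank
    have h2 : Module.finrank ℂ (ℂ × ℂ) = 2 := by
      simp [Module.finrank_prod]
    have h4' : Module.finrank ℂ (Matrix (Fin 2) (Fin 2) ℂ) = 4 := by
      simp [Module.finrank_matrix]
    rw [hSker]
    omega
end
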